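/- Let L₁, …, L_M be lists of natural numbers, each sorted in nondecreasing order. Then folding the spike-merge operation over their differential encodings yields the differential encoding of the sorted merge of all of them: foldr merge [] [diff(L₁), …, diff(L_M)] = diff(sortedMerge(L₁, …, L_M)), where sortedMerge(L₁, …, L_M) is the nondecreasing list whose multiset of entries is the sum of the multisets of entries of L₁, …, L_M. -/

import Mathlib

/-!
On a sorted list starting from a reference time `p`, `diffAux p` records the gaps between
consecutive spike times. Comparing the heads `a - p` and `b - p` of two such gap lists compares
`a` and `b`, and the remainder `(b - p) - (a - p) = b - a` is exactly the gap from the emitted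
spike `a` to the pending spike `b`. Hence `smerge` of two gap lists is the gap list of the
ordinary sorted merge, and folding this binary fact over the trains gives the theorem, since a
sorted list is determined by its multiset of entries.
-/

/-- Differential encoding with respect to a previous time. -/
def diffAux : ℕ → List ℕ → List ℕ
  | _, [] => []
  | prev, a :: as => (a - prev) :: diffAux a as

/-- Differential encoding: `diff [a₁, …, aₙ] = [a₁ - 0, a₂ - a₁, …, aₙ - aₙ₋₁]`. -/
def diff (A : List ℕ) : List ℕ := diffAux 0 A

/-- The spike-merge operation on differential-time encoded spike trains. -/
def smerge : List ℕ → List ℕ → List ℕ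
  | [], ys => ys
  | xs, [] => xs
  | x :: xs, y :: ys =>
    if x ≤ y then x :: smerge xs ((y - x) :: ys)
    else y :: smerge ((x - y) :: xs) ys
termination_by xs ys => xs.length + ys.length
decreasing_by all_goals simp

section MergeAll

variable {α : Type*} [LinearOrder α]

def mergeAll (Ls : List (List α)) : List α :=
  Ls.foldr (fun L M => L.merge M) []

@[simp]
theorem mergeAll_cons (L : List α) (Ls : List (List α)) :
    mergeAll (L :: Ls) = L.merge (mergeAll Ls) := rfl

theorem pairwise_mergeAll {Ls : List (List α)} (hLs : ∀ L ∈ Ls, L.Pairwise (· ≤ ·)) :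
    (mergeAll Ls).Pairwise (· ≤ ·) := by
  induction Ls with
  | nil => exact List.Pairwise.nil
  | cons L Ls ih =>
    exact (hLs L List.mem_cons_self).merge (ih fun M hM => hLs M (List.mem_cons_of_mem L hM))

theorem coe_mergeAll (Ls : List (List α)) :
    (mergeAll Ls : Multiset α) = (Ls.map (fun L : List α => (L : Multiset α))).sum := by
  induction Ls with
  | nil => rfl
  | cons L Ls ih =>
    rw [mergeAll_cons, List.map_cons, List.sum_cons, ← ih, Multiset.coe_add,
      Multiset.coe_eq_coe]
    exact List.merge_perm_append _

end MergeAll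

@[simp]
theorem smerge_nil_left (ys : List ℕ) : smerge [] ys = ys := by
  rw [smerge.eq_def]

@[simp]
theorem smerge_nil_right (xs : List ℕ) : smerge xs [] = xs := by
  rw [smerge.eq_def]; cases xs <;> rfl

theorem smerge_cons_cons (x y : ℕ) (xs ys : List ℕ) :
    smerge (x :: xs) (y :: ys) =
      if x ≤ y then x :: smerge xs ((y - x) :: ys)
      else y :: smerge ((x - y) :: xs) ys := by
  rw [smerge.eq_def]

theorem smerge_sub_cons_sub_cons {p a b : ℕ} (hpa : p ≤ a) (hpb : p ≤ b) (xs ys : List ℕ) :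
    smerge ((a - p) :: xs) ((b - p) :: ys) =
      if a ≤ b then (a - p) :: smerge xs ((b - a) :: ys)
      else (b - p) :: smerge ((a - b) :: xs) ys := by
  simp only [smerge_cons_cons, Nat.sub_le_sub_iff_right hpb, Nat.sub_sub_sub_cancel_right hpa,
    Nat.sub_sub_sub_cancel_right hpb]

theorem smerge_diffAux {p : ℕ} {A B : List ℕ} (hA : (p :: A).Pairwise (· ≤ ·))
    (hB : (p :: B).Pairwise (· ≤ ·)) :
    smerge (diffAux p A) (diffAux p B) = diffAux p (A.merge B) := by
  induction A generalizing p B with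
  | nil => simp [diffAux]
  | cons a as ihA =>
    induction B generalizing p with
    | nil => simp [diffAux]
    | cons b bs ihB =>
      obtain ⟨hpa, hA⟩ := List.pairwise_cons_cons_iff_of_trans.mp hA
      obtain ⟨hpb, hB⟩ := List.pairwise_cons_cons_iff_of_trans.mp hB
      simp only [diffAux]
      rw [smerge_sub_cons_sub_cons hpa hpb]
      by_cases hab : a ≤ b
      · rw [if_pos hab, List.cons_merge_cons_pos _ _ _ (decide_eq_true hab), diffAux,
          ← ihA hA (hB.cons_cons_of_trans hab)]
        rfl
      · have hba : b ≤ a := le_of_not_ge hab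
        rw [if_neg hab, List.cons_merge_cons_neg _ _ _ (by simpa using hab), diffAux,
          ← ihB (hA.cons_cons_of_trans hba) hB]
        rfl

theorem smerge_diff {A B : List ℕ} (hA : A.Pairwise (· ≤ ·)) (hB : B.Pairwise (· ≤ ·)) :
    smerge (diff A) (diff B) = diff (A.merge B) :=
  smerge_diffAux (hA.cons fun a _ => Nat.zero_le a) (hB.cons fun b _ => Nat.zero_le b)

theorem foldr_smerge_map_diff {Ls : List (List ℕ)} (hLs : ∀ L ∈ Ls, L.Pairwise (· ≤ ·)) :
    List.foldr smerge [] (Ls.map diff) = diff (mergeAll Ls) := by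
  induction Ls with
  | nil => rfl
  | cons L Ls ih =>
    have hLs' : ∀ M ∈ Ls, M.Pairwise (· ≤ ·) := fun M hM => hLs M (List.mem_cons_of_mem L hM)
    rw [List.map_cons, List.foldr_cons, ih hLs', mergeAll_cons,
      smerge_diff (hLs L List.mem_cons_self) (pairwise_mergeAll hLs')]

/-- Extension of Proposition 1 to an arbitrary number of spike trains:
folding the spike-merge over the differential encodings yields the
differential encoding of the sorted merge of all the spike trains. -/
theorem foldr_smerge_diff_eq_diff_sortedMerge
    (Ls : List (List ℕ)) (hLs : ∀ L ∈ Ls, L.Pairwise (· ≤ ·))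
    (C : List ℕ) (hC : C.Pairwise (· ≤ ·))
    (hCmul : (C : Multiset ℕ) = (Ls.map (fun L => (L : Multiset ℕ))).sum) :
    List.foldr smerge [] (Ls.map diff) = diff C := by
  -- In `hCmul` the coercion `List ℕ → Multiset ℕ` is elaborated through the list monad,
  -- as `(do let a ← Ls; pure ↑a).map id`; `map_eq_flatMap` reconciles it with `coe_mergeAll`.
  have hperm : (mergeAll Ls).Perm C :=
    Multiset.coe_eq_coe.mp (by rw [coe_mergeAll, hCmul]; simp [List.map_eq_flatMap])
  rw [foldr_smerge_map_diff hLs, hperm.eq_of_pairwise' (pairwise_mergeAll hLs) hC]
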